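/- Let k be a field of characteristic zero, A = k[[t_1,…,t_n]], and suppose the g×g matrix (f_{jl}) over k[[t_1,…,t_n]] is invertible. Viewing each f_{jl} as an element of R[[t_1]] with R = k[[t_2,…,t_n]], there exist series φ_1,…,φ_g ∈ t_1·k[[t_1,…,t_n]] such that ∑_l f_{il}(φ_l, t_2,…,t_n)·(∂φ_l/∂t_1) = δ_{i1} as elements of k[[t_1,…,t_n]], where substitution replaces the variable t_1 by φ_l. -/

import Mathlib

open PowerSeries Finset in
/-- Composition `f(g)` of formal power series (substitution in the variable `t₁`),
valid when `g` has zero constant term. -/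
noncomputable def psComp {R : Type*} [CommRing R] (f g : PowerSeries R) : PowerSeries R :=
  PowerSeries.mk fun n => ∑ m ∈ Finset.range (n + 1),
    PowerSeries.coeff m f * PowerSeries.coeff n (g ^ m)

/-!
Write `φ_l = ∑ₚ a_{p,l} t^p` with `a_{0,l} = 0`. Modulo `t^(n+1)`, the series `f_{il}(φ_l)` only
depends on `φ_l` modulo `t^(n+1)`, so the coefficient of `t^n` in `∑ₗ f_{il}(φ_l) φ_l'` is
`(n + 1) ∑ₗ f_{il}(0) a_{n+1,l}` plus an expression in `a_1, …, a_n`. The matrix `(f_{il}(0))` of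
constant terms is invertible and so is `n + 1`, so the vectors `a_{n+1}` can be solved for
recursively.
-/

open PowerSeries Finset Matrix

section Composition

variable {R : Type*} [CommRing R]

theorem coeff_zero_psComp (f g : R⟦X⟧) : coeff 0 (psComp f g) = constantCoeff f := by
  simp [psComp]

theorem trunc_psComp_trunc (f g : R⟦X⟧) (n : ℕ) :
    trunc n (psComp f (trunc n g)) = trunc n (psComp f g) := by
  ext d
  rw [coeff_trunc, coeff_trunc]
  split_ifs with hd
  · simp only [psComp, coeff_mk]
    refine sum_congr rfl fun M _ => ?_
    rw [← coeff_coe_trunc_of_lt hd, trunc_trunc_pow, coeff_coe_trunc_of_lt hd]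
  · rfl

end Composition

section Pullback

variable {R : Type*} [CommRing R] {ι : Type*} [Fintype ι]

/-- The pullback `∑ₗ f_{il}(φ_l) dφ_l` of the one-forms `∑ₗ f_{il}(x_l) dx_l`
along the curve `x = φ(t)`. -/
noncomputable def pullbackForm (f : Matrix ι ι R⟦X⟧) (φ : ι → R⟦X⟧) (i : ι) : R⟦X⟧ :=
  ∑ l, psComp (f i l) (φ l) * d⁄dX R (φ l)

theorem coeff_pullbackForm_congr (f : Matrix ι ι R⟦X⟧) {φ ψ : ι → R⟦X⟧} {n : ℕ}
    (h : ∀ l, trunc (n + 2) (φ l) = trunc (n + 2) (ψ l)) (i : ι) :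
    coeff n (pullbackForm f φ i) = coeff n (pullbackForm f ψ i) := by
  simp only [pullbackForm, map_sum]
  refine sum_congr rfl fun l _ => ?_
  have h' : trunc (n + 1) (φ l) = trunc (n + 1) (ψ l) := by
    rw [← trunc_trunc_of_le (φ l) (n + 1).le_succ, h l, trunc_trunc_of_le (ψ l) (n + 1).le_succ]
  rw [coeff_mul_eq_coeff_trunc_mul_trunc _ _ n.lt_succ_self,
    coeff_mul_eq_coeff_trunc_mul_trunc (psComp (f i l) (ψ l)) _ n.lt_succ_self,
    ← trunc_psComp_trunc, ← trunc_psComp_trunc _ (ψ l), h', trunc_derivative, trunc_derivative, h l]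

theorem derivative_C_mul_X_pow_succ (r : R) (n : ℕ) :
    d⁄dX R (C r * X ^ (n + 1)) = C (r * (n + 1)) * X ^ n := by
  rw [Derivation.leibniz, Derivation.leibniz_pow, derivative_C, derivative_X, smul_zero, add_zero,
    add_tsub_cancel_right, smul_eq_mul, nsmul_eq_mul, map_mul, map_add, map_natCast, map_one]
  push_cast
  ring

theorem coeff_pullbackForm_add_C_mul_X_pow (f : Matrix ι ι R⟦X⟧) (φ : ι → R⟦X⟧) (v : ι → R)
    (n : ℕ) (i : ι) :
    coeff n (pullbackForm f (fun l => φ l + C (v l) * X ^ (n + 1)) i) =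
      coeff n (pullbackForm f φ i) + (n + 1) * (f.map constantCoeff *ᵥ v) i := by
  simp only [pullbackForm, map_sum, mulVec, dotProduct, map_apply, mul_sum,
    ← sum_add_distrib]
  refine sum_congr rfl fun l _ => ?_
  have htrunc : trunc (n + 1) (φ l + C (v l) * X ^ (n + 1)) = trunc (n + 1) (φ l) := by
    ext d
    rw [map_add, Polynomial.coeff_add, coeff_trunc, coeff_trunc, coeff_C_mul_X_pow]
    split_ifs <;> first | omega | simp only [add_zero]
  have hcomp : coeff n (psComp (f i l) (φ l + C (v l) * X ^ (n + 1)) * d⁄dX R (φ l)) =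
      coeff n (psComp (f i l) (φ l) * d⁄dX R (φ l)) := by
    rw [coeff_mul_eq_coeff_trunc_mul_trunc _ _ n.lt_succ_self,
      coeff_mul_eq_coeff_trunc_mul_trunc (psComp _ _) _ n.lt_succ_self, ← trunc_psComp_trunc,
      ← trunc_psComp_trunc _ (φ l), htrunc]
  rw [map_add, mul_add, map_add, hcomp, derivative_C_mul_X_pow_succ,
    ← mul_assoc, coeff_mul_X_pow', if_pos le_rfl, Nat.sub_self, coeff_mul_C, coeff_zero_psComp]
  ring

end Pullback

section Solution

variable {R : Type*} [CommRing R] [Algebra ℚ R] {ι : Type*} [Fintype ι] [DecidableEq ι]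

noncomputable def approxSolution (f : Matrix ι ι R⟦X⟧) (h : ι → R⟦X⟧) : ℕ → ι → R⟦X⟧
  | 0 => 0
  | n + 1 =>
    let φ := approxSolution f h n
    let v := (n + 1 : ℚ)⁻¹ •
      ((f.map constantCoeff)⁻¹ *ᵥ fun i => coeff n (h i - pullbackForm f φ i))
    fun l => φ l + C (v l) * X ^ (n + 1)

theorem coeff_pullbackForm_approxSolution_succ {f : Matrix ι ι R⟦X⟧}
    (hf : IsUnit (f.map constantCoeff)) (h : ι → R⟦X⟧) (n : ℕ) (i : ι) :
    coeff n (pullbackForm f (approxSolution f h (n + 1)) i) = coeff n (h i) := by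
  have hc : f.map constantCoeff * (f.map constantCoeff)⁻¹ = 1 :=
    mul_nonsing_inv _ ((isUnit_iff_isUnit_det _).mp hf)
  rw [approxSolution, coeff_pullbackForm_add_C_mul_X_pow, mulVec_smul, mulVec_mulVec, hc,
    one_mulVec]
  have hn : ((n : R) + 1) = algebraMap ℚ R (n + 1) := by simp
  rw [Pi.smul_apply, hn, ← Algebra.smul_def, smul_smul, mul_inv_cancel₀ n.cast_add_one_ne_zero,
    one_smul, map_sub, add_sub_cancel]

theorem coeff_approxSolution_of_le (f : Matrix ι ι R⟦X⟧) (h : ι → R⟦X⟧) {p N : ℕ} (hpN : p ≤ N)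
    (l : ι) : coeff p (approxSolution f h N l) = coeff p (approxSolution f h p l) := by
  induction N, hpN using Nat.le_induction with
  | base => rfl
  | succ N hpN ih =>
    rw [approxSolution, map_add, coeff_C_mul_X_pow, if_neg (by omega), add_zero, ih]

noncomputable def solution (f : Matrix ι ι R⟦X⟧) (h : ι → R⟦X⟧) (l : ι) : R⟦X⟧ :=
  mk fun p => coeff p (approxSolution f h p l)

theorem constantCoeff_solution (f : Matrix ι ι R⟦X⟧) (h : ι → R⟦X⟧) (l : ι) :
    constantCoeff (solution f h l) = 0 := by
  rw [← coeff_zero_eq_constantCoeff_apply, solution, coeff_mk]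
  rfl

theorem trunc_solution (f : Matrix ι ι R⟦X⟧) (h : ι → R⟦X⟧) (n : ℕ) (l : ι) :
    trunc (n + 1) (solution f h l) = trunc (n + 1) (approxSolution f h n l) := by
  ext p
  rw [coeff_trunc, coeff_trunc]
  split_ifs with hp
  · rw [solution, coeff_mk, coeff_approxSolution_of_le f h (Nat.lt_succ_iff.mp hp)]
  · rfl

theorem pullbackForm_solution {f : Matrix ι ι R⟦X⟧} (hf : IsUnit (f.map constantCoeff))
    (h : ι → R⟦X⟧) : pullbackForm f (solution f h) = h := by
  ext i n
  rw [coeff_pullbackForm_congr f (fun l => trunc_solution f h (n + 1) l),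
    coeff_pullbackForm_approxSolution_succ hf]

end Solution

open PowerSeries in
/-- Over a field `k` of characteristic zero, identify `k[[t_1, …, t_n]]` (with `n = m + 1`)
with `R[[t_1]]` where `R = k[[t_2, …, t_n]]`.  If the `g × g` matrix `f` over
`k[[t_1, …, t_n]]` is invertible, then there exist `φ_1, …, φ_g ∈ t_1·k[[t_1, …, t_n]]`
such that `∑_l f_{il}(φ_l, t_2, …, t_n) · ∂φ_l/∂t_1 = δ_{i1}` in `k[[t_1, …, t_n]]`. -/
theorem stmt_7 {k : Type*} [Field k] [CharZero k] (m g : ℕ)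
    (f : Matrix (Fin g) (Fin g) (PowerSeries (MvPowerSeries (Fin m) k)))
    (hf : IsUnit f) :
    ∃ φ : Fin g → PowerSeries (MvPowerSeries (Fin m) k),
      (∀ l, PowerSeries.constantCoeff (φ l) = 0) ∧
      ∀ i, ∑ l, psComp (f i l) (φ l) * (φ l).derivativeFun
        = if (i : ℕ) = 0 then 1 else 0 := by
  have hf₀ : IsUnit (f.map constantCoeff) := hf.map (RingHom.mapMatrix constantCoeff)
  exact ⟨solution f _, constantCoeff_solution f _, congrFun (pullbackForm_solution hf₀ _)⟩
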